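/- arXiv:1811.02002 — 5 statements merged into one kernel-verified Lean document; each statement's English description precedes it below -/
import Mathlib

section
/- Derivative of relative entropy in its first argument: Let μ, μ', μ'' ∈ M(Z) have densities ρ, ρ', ρ''. Assume that ρ''/ρ is essentially bounded on Z and that ρ log(ρ/ρ') and ρ'' log(ρ/ρ') are Lebesgue integrable on Z. Then the function ε ↦ ∫_Z (ρ + ε ρ'') log((ρ + ε ρ'')/ρ') dz, defined for ε ≥ 0, has right-hand derivative at ε = 0 equal to ∫_Z ρ'' (1 + log(ρ/ρ')) dz. -/
/-! Since `|ρ''| ≤ C ρ`, for `|ε| < 1 / (2 (|C| + 1))` the perturbed density `ρ + ε ρ''` stays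
between `ρ / 2` and `3 ρ / 2`. Hence the `ε`-derivative `ρ'' (1 + log ((ρ + ε ρ'') / ρ'))` of the
integrand is dominated by `|ρ''| (2 + |log (ρ / ρ')|)`, which is integrable, and differentiation
under the integral sign yields even the two-sided derivative at `0`. -/

open MeasureTheory Real ENNReal

namespace Paper

noncomputable section

/-- Total variation distance between two measures:
`dTV(μ,μ') = sup over measurable A of |μ(A) − μ'(A)|`. -/
def tvDist {E : Type*} [MeasurableSpace E] (μ μ' : Measure E) : ℝ :=
  ⨆ A : {A : Set E // MeasurableSet A}, |(μ A.1).toReal - (μ' A.1).toReal|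

/-- Essential supremum of `|h|` on `Z` with respect to Lebesgue measure. -/
def supNormOn {d : ℕ} (Z : Set (Fin d → ℝ)) (h : (Fin d → ℝ) → ℝ) : ℝ :=
  (essSup (fun z => ENNReal.ofReal |h z|) (volume.restrict Z)).toReal

/-- `μ ∈ M(Z)`: a Borel probability measure on `Z`, absolutely continuous w.r.t.
Lebesgue measure restricted to `Z`, with (a.e. on `Z`) positive density `ρ`. -/
def IsDensityMeasure {d : ℕ} (Z : Set (Fin d → ℝ)) (μ : Measure (Fin d → ℝ))
    (ρ : (Fin d → ℝ) → ℝ) : Prop :=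
  IsProbabilityMeasure μ ∧ Measurable ρ ∧
    (∀ᵐ z ∂(volume.restrict Z), 0 < ρ z) ∧
    μ = (volume.restrict Z).withDensity (fun z => ENNReal.ofReal (ρ z))

/-- Entropic mirror-descent update `MD_η(μ, h)` for `μ` with density `ρ` on `Z`:
the probability measure with density `ρ e^{−ηh} / ∫_Z ρ e^{−ηh}`. -/
def MDmeas {d : ℕ} (Z : Set (Fin d → ℝ)) (η : ℝ) (ρ h : (Fin d → ℝ) → ℝ) :
    Measure (Fin d → ℝ) :=
  (volume.restrict Z).withDensity
    (fun z => ENNReal.ofReal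
      (ρ z * Real.exp (-η * h z) / ∫ y in Z, ρ y * Real.exp (-η * h y)))

/-- Gibbs measure on `Z` with density `e^h / ∫_Z e^h` w.r.t. Lebesgue measure. -/
def gibbsMeasure {d : ℕ} (Z : Set (Fin d → ℝ)) (h : (Fin d → ℝ) → ℝ) :
    Measure (Fin d → ℝ) :=
  (volume.restrict Z).withDensity
    (fun z => ENNReal.ofReal (Real.exp (h z) / ∫ y in Z, Real.exp (h y)))

/-- Log-partition functional `Φ*(h) = log ∫_Z e^h dz`. -/
def logPart {d : ℕ} (Z : Set (Fin d → ℝ)) (h : (Fin d → ℝ) → ℝ) : ℝ :=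
  Real.log (∫ z in Z, Real.exp (h z))

/-- Dual Bregman divergence `D*(h,h') = Φ*(h) − Φ*(h') − ∫_Z (h−h') dGibbs(h')`. -/
def dualBregman {d : ℕ} (Z : Set (Fin d → ℝ)) (h h' : (Fin d → ℝ) → ℝ) : ℝ :=
  logPart Z h - logPart Z h' - ∫ z, (h z - h' z) ∂(gibbsMeasure Z h')

/-- Payoff operator `(Gν)(w) = ∫_Θ K(w,θ) dν(θ)`. -/
def Gop {p q : ℕ} (K : (Fin p → ℝ) → (Fin q → ℝ) → ℝ) (ν : Measure (Fin q → ℝ))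
    (w : Fin p → ℝ) : ℝ :=
  ∫ θ, K w θ ∂ν

/-- Adjoint payoff operator `(G†μ)(θ) = ∫_W K(w,θ) dμ(w)`. -/
def Gadj {p q : ℕ} (K : (Fin p → ℝ) → (Fin q → ℝ) → ℝ) (μ : Measure (Fin p → ℝ))
    (θ : Fin q → ℝ) : ℝ :=
  ∫ w, K w θ ∂μ

/-- Mixed-strategy game value `F(μ,ν) = ⟨μ,g⟩ − ⟨μ,Gν⟩`. -/
def payoff {p q : ℕ} (g : (Fin p → ℝ) → ℝ) (K : (Fin p → ℝ) → (Fin q → ℝ) → ℝ)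
    (μ : Measure (Fin p → ℝ)) (ν : Measure (Fin q → ℝ)) : ℝ :=
  (∫ w, g w ∂μ) - ∫ w, Gop K ν w ∂μ

lemma abs_log_le_one_of_mem_Icc {y : ℝ} (hy : y ∈ Set.Icc (1 / 2 : ℝ) 2) : |log y| ≤ 1 := by
  obtain ⟨hlo, hhi⟩ := hy
  have hpos : 0 < y := by linarith
  have hinv : y⁻¹ ≤ 2 := by rw [inv_le_comm₀ hpos two_pos]; linarith
  rw [abs_le]
  constructor
  · linarith [one_sub_inv_le_log_of_pos hpos]
  · linarith [log_le_sub_one_of_pos hpos]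

lemma abs_one_add_log_div_le {a b t : ℝ} (ha : 0 < a) (hb : 0 < b) (ht : |t| ≤ a / 2) :
    |1 + log ((a + t) / b)| ≤ 2 + |log (a / b)| := by
  obtain ⟨ht₁, ht₂⟩ := abs_le.mp ht
  have hat : 0 < a + t := by linarith
  have hsplit : log ((a + t) / b) = log ((a + t) / a) + log (a / b) := by
    rw [← log_mul (by positivity) (by positivity), div_mul_div_cancel₀ ha.ne']
  have hratio : (a + t) / a ∈ Set.Icc (1 / 2 : ℝ) 2 := by
    constructor
    · rw [le_div_iff₀ ha]; linarith
    · rw [div_le_iff₀ ha]; linarith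
  calc |1 + log ((a + t) / b)| ≤ |1| + |log ((a + t) / a)| + |log (a / b)| := by
        rw [hsplit, ← add_assoc]; exact (abs_add_le _ _).trans (by gcongr; exact abs_add_le _ _)
    _ ≤ 2 + |log (a / b)| := by
        rw [abs_one]; linarith [abs_log_le_one_of_mem_Icc hratio]

lemma _root_.HasDerivAt.mul_log_div_const {f : ℝ → ℝ} {f' x c : ℝ} (hf : HasDerivAt f f' x)
    (hfx : f x ≠ 0) (hc : c ≠ 0) :
    HasDerivAt (fun t => f t * log (f t / c)) (f' * (1 + log (f x / c))) x := by
  refine (hf.mul ((hf.div_const c).log (div_ne_zero hfx hc))).congr_deriv ?_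
  field_simp
  ring

lemma integrable_of_isFiniteMeasure_withDensity_ofReal {α : Type*} [MeasurableSpace α]
    {ν : Measure α} {f : α → ℝ} (hf : AEStronglyMeasurable f ν) (hf₀ : 0 ≤ᵐ[ν] f)
    [IsFiniteMeasure (ν.withDensity fun z => ENNReal.ofReal (f z))] : Integrable f ν := by
  refine ⟨hf, (hasFiniteIntegral_iff_ofReal hf₀).2 ?_⟩
  simpa [withDensity_apply _ MeasurableSet.univ] using
    measure_lt_top (ν.withDensity fun z => ENNReal.ofReal (f z)) Set.univ

lemma abs_mul_le_half_of_abs_lt {x v a C : ℝ} (ha : 0 < a) (hv : |v| ≤ C * a)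
    (hx : |x| < 1 / (2 * (|C| + 1))) : |x * v| ≤ a / 2 := by
  have hC : C * a ≤ (|C| + 1) * a := by gcongr; linarith [le_abs_self C]
  calc |x * v| = |x| * |v| := abs_mul x v
    _ ≤ 1 / (2 * (|C| + 1)) * ((|C| + 1) * a) := by gcongr; exact hv.trans hC
    _ = a / 2 := by field_simp

theorem hasDerivAt_integral_add_mul_mul_log_div {α : Type*} [MeasurableSpace α] {ν : Measure α}
    {ρ ρ' ρ'' : α → ℝ} {C : ℝ} (hρm : Measurable ρ) (hρ'm : Measurable ρ') (hρ''m : Measurable ρ'')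
    (hρ : ∀ᵐ z ∂ν, 0 < ρ z) (hρ' : ∀ᵐ z ∂ν, 0 < ρ' z) (hC : ∀ᵐ z ∂ν, |ρ'' z| ≤ C * ρ z)
    (hρ''i : Integrable ρ'' ν) (hi : Integrable (fun z => ρ z * log (ρ z / ρ' z)) ν)
    (hi'' : Integrable (fun z => ρ'' z * log (ρ z / ρ' z)) ν) :
    HasDerivAt (fun ε : ℝ => ∫ z, (ρ z + ε * ρ'' z) * log ((ρ z + ε * ρ'' z) / ρ' z) ∂ν)
      (∫ z, ρ'' z * (1 + log (ρ z / ρ' z)) ∂ν) 0 := by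
  set δ : ℝ := 1 / (2 * (|C| + 1))
  have hδ : 0 < δ := by positivity
  have hsmall : ∀ᵐ z ∂ν, ∀ x ∈ Metric.ball (0 : ℝ) δ,
      0 < ρ z ∧ 0 < ρ' z ∧ |x * ρ'' z| ≤ ρ z / 2 := by
    filter_upwards [hρ, hρ', hC] with z hz hz' hzC x hx
    rw [Metric.mem_ball, dist_zero_right, Real.norm_eq_abs] at hx
    exact ⟨hz, hz', abs_mul_le_half_of_abs_lt hz hzC hx⟩
  have h_bound : ∀ᵐ z ∂ν, ∀ x ∈ Metric.ball (0 : ℝ) δ,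
      ‖ρ'' z * (1 + log ((ρ z + x * ρ'' z) / ρ' z))‖ ≤ |ρ'' z| * (2 + |log (ρ z / ρ' z)|) := by
    filter_upwards [hsmall] with z hz x hx
    obtain ⟨hpos, hpos', hx⟩ := hz x hx
    rw [Real.norm_eq_abs, abs_mul]
    gcongr
    exact abs_one_add_log_div_le hpos hpos' hx
  have h_diff : ∀ᵐ z ∂ν, ∀ x ∈ Metric.ball (0 : ℝ) δ,
      HasDerivAt (fun ε : ℝ => (ρ z + ε * ρ'' z) * log ((ρ z + ε * ρ'' z) / ρ' z))
        (ρ'' z * (1 + log ((ρ z + x * ρ'' z) / ρ' z))) x := by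
    filter_upwards [hsmall] with z hz x hx
    obtain ⟨hpos, hpos', hx⟩ := hz x hx
    have hline : HasDerivAt (fun ε : ℝ => ρ z + ε * ρ'' z) (ρ'' z) x := by
      simpa using ((hasDerivAt_id x).mul_const (ρ'' z)).const_add (ρ z)
    exact hline.mul_log_div_const (by linarith [(abs_le.mp hx).1]) hpos'.ne'
  have h_int_bound : Integrable (fun z => |ρ'' z| * (2 + |log (ρ z / ρ' z)|)) ν := by
    refine ((hρ''i.abs.const_mul 2).add hi''.abs).congr (.of_forall fun z => ?_)
    simp only [Pi.add_apply, abs_mul]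
    ring
  simpa using (hasDerivAt_integral_of_dominated_loc_of_deriv_le (Metric.ball_mem_nhds 0 hδ)
    (.of_forall fun x => by fun_prop) (by simpa only [zero_mul, add_zero] using hi)
    (by fun_prop) h_bound h_int_bound h_diff).2

lemma IsDensityMeasure.integrable {d : ℕ} {Z : Set (Fin d → ℝ)} {μ : Measure (Fin d → ℝ)}
    {ρ : (Fin d → ℝ) → ℝ} (h : IsDensityMeasure Z μ ρ) : Integrable ρ (volume.restrict Z) := by
  obtain ⟨_, hm, hpos, rfl⟩ := h
  exact integrable_of_isFiniteMeasure_withDensity_ofReal hm.aestronglyMeasurable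
    (hpos.mono fun _ => le_of_lt)

theorem relativeEntropy_rightDeriv_general
    (d : ℕ) (Z : Set (Fin d → ℝ))
    (μ μ' μ'' : Measure (Fin d → ℝ)) (ρ ρ' ρ'' : (Fin d → ℝ) → ℝ)
    (hμ : IsDensityMeasure Z μ ρ) (hμ' : IsDensityMeasure Z μ' ρ')
    (hμ'' : IsDensityMeasure Z μ'' ρ'')
    (hratio : ∃ C, ∀ᵐ z ∂(volume.restrict Z), |ρ'' z / ρ z| ≤ C)
    (hint1 : IntegrableOn (fun z => ρ z * Real.log (ρ z / ρ' z)) Z)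
    (hint2 : IntegrableOn (fun z => ρ'' z * Real.log (ρ z / ρ' z)) Z) :
    HasDerivWithinAt
      (fun ε : ℝ => ∫ z in Z, (ρ z + ε * ρ'' z) * Real.log ((ρ z + ε * ρ'' z) / ρ' z))
      (∫ z in Z, ρ'' z * (1 + Real.log (ρ z / ρ' z))) (Set.Ici (0 : ℝ)) 0 := by
  obtain ⟨C, hC⟩ := hratio
  obtain ⟨-, hρm, hρ, -⟩ := hμ
  obtain ⟨-, hρ'm, hρ', -⟩ := hμ'
  have hρ''C : ∀ᵐ z ∂(volume.restrict Z), |ρ'' z| ≤ C * ρ z := by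
    filter_upwards [hC, hρ] with z hz hpos
    rwa [abs_div, abs_of_pos hpos, div_le_iff₀ hpos] at hz
  exact (hasDerivAt_integral_add_mul_mul_log_div hρm hρ'm hμ''.2.1 hρ hρ' hρ''C
    hμ''.integrable hint1 hint2).hasDerivWithinAt

/-- right-hand derivative of the relative entropy in its first argument. -/
theorem relativeEntropy_rightDeriv
    (d : ℕ) (Z : Set (Fin d → ℝ)) (hZ : MeasurableSet Z)
    (hZ0 : volume Z ≠ 0) (hZfin : volume Z ≠ ⊤)
    (μ μ' μ'' : Measure (Fin d → ℝ)) (ρ ρ' ρ'' : (Fin d → ℝ) → ℝ)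
    (hμ : IsDensityMeasure Z μ ρ) (hμ' : IsDensityMeasure Z μ' ρ')
    (hμ'' : IsDensityMeasure Z μ'' ρ'')
    (hratio : ∃ C, ∀ᵐ z ∂(volume.restrict Z), |ρ'' z / ρ z| ≤ C)
    (hint1 : IntegrableOn (fun z => ρ z * Real.log (ρ z / ρ' z)) Z)
    (hint2 : IntegrableOn (fun z => ρ'' z * Real.log (ρ z / ρ' z)) Z) :
    HasDerivWithinAt
      (fun ε : ℝ => ∫ z in Z, (ρ z + ε * ρ'' z) * Real.log ((ρ z + ε * ρ'' z) / ρ' z))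
      (∫ z in Z, ρ'' z * (1 + Real.log (ρ z / ρ' z))) (Set.Ici (0 : ℝ)) 0 :=
  relativeEntropy_rightDeriv_general d Z μ μ' μ'' ρ ρ' ρ'' hμ hμ' hμ'' hratio hint1 hint2

end

end Paper
end

section
/- Strong convexity of negative entropy with respect to total variation: Let μ, μ' ∈ M(Z) have densities ρ, ρ' with ρ log ρ and ρ' log ρ' Lebesgue integrable, and let λ ∈ (0,1). Then Φ(λμ + (1−λ)μ') ≤ λ Φ(μ) + (1−λ) Φ(μ') − 2 λ (1−λ) dTV(μ, μ')². -/
open MeasureTheory Real ENNReal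

namespace Paper

noncomputable section

/-!
Write `m = λρ + (1 - λ)ρ'`. Since `m log m = λ ρ log m + (1 - λ) ρ' log m`, the entropy gap
`λ Φ(μ) + (1 - λ) Φ(μ') - Φ(m)` is exactly `λ KL(ρ ‖ m) + (1 - λ) KL(ρ' ‖ m)`. Pinsker's inequality
`KL(p ‖ q) ≥ ‖p - q‖₁² / 2`, with `‖ρ - m‖₁ = (1 - λ) ‖ρ - ρ'‖₁` and `‖ρ' - m‖₁ = λ ‖ρ - ρ'‖₁`,
bounds the gap below by `λ (1 - λ) ‖ρ - ρ'‖₁² / 2`, and `dTV(μ, μ') ≤ ‖ρ - ρ'‖₁ / 2`.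

Pinsker's inequality itself comes from the scalar bound `3 (t - 1)² ≤ 2 (t + 2) (t log t - t + 1)`,
sharp to second order at `t = 1`, applied at `t = p / q` and combined with Cauchy–Schwarz for the
weight `p + 2q`, whose integral is `3`.
-/

open Set InformationTheory

lemma isMinOn_of_hasDerivAt_of_sign {s : Set ℝ} (hs : s.OrdConnected) {f f' : ℝ → ℝ} {a : ℝ}
    (ha : a ∈ s) (hf : ∀ t ∈ s, HasDerivAt f (f' t) t) (hf' : ∀ t ∈ s, 0 ≤ (t - a) * f' t) :
    IsMinOn f s a := by
  intro t ht
  have hcont : ContinuousOn f s := fun x hx => (hf x hx).continuousAt.continuousWithinAt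
  rcases le_total a t with hat | hta
  · refine monotoneOn_of_hasDerivWithinAt_nonneg (f' := f') (convex_Icc a t)
      (hcont.mono (hs.out ha ht)) (fun x hx => ?_) (fun x hx => ?_) ⟨le_rfl, hat⟩ ⟨hat, le_rfl⟩ hat
    all_goals rw [interior_Icc] at hx
    · exact (hf x (hs.out ha ht (Ioo_subset_Icc_self hx))).hasDerivWithinAt
    · exact nonneg_of_mul_nonneg_right (hf' x (hs.out ha ht (Ioo_subset_Icc_self hx)))
        (sub_pos.2 hx.1)
  · refine antitoneOn_of_hasDerivWithinAt_nonpos (f' := f') (convex_Icc t a)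
      (hcont.mono (hs.out ht ha)) (fun x hx => ?_) (fun x hx => ?_) ⟨le_rfl, hta⟩ ⟨hta, le_rfl⟩ hta
    all_goals rw [interior_Icc] at hx
    · exact (hf x (hs.out ht ha (Ioo_subset_Icc_self hx))).hasDerivWithinAt
    · exact nonpos_of_mul_nonneg_right (hf' x (hs.out ht ha (Ioo_subset_Icc_self hx)))
        (sub_neg.2 hx.2)

lemma monotoneOn_add_one_mul_log_sub :
    MonotoneOn (fun t : ℝ => (t + 1) * Real.log t - 2 * (t - 1)) (Ioi 0) := by
  have hderiv : ∀ t ∈ Ioi (0 : ℝ),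
      HasDerivAt (fun t : ℝ => (t + 1) * Real.log t - 2 * (t - 1)) (Real.log t + 1 / t - 1) t := by
    intro t (ht : 0 < t)
    refine ((((hasDerivAt_id t).add_const 1).mul (hasDerivAt_log ht.ne')).sub
      (((hasDerivAt_id t).sub_const 1).const_mul 2)).congr_deriv ?_
    simp only [id]
    field_simp
    ring
  refine monotoneOn_of_hasDerivWithinAt_nonneg (f' := fun t => Real.log t + 1 / t - 1)
    (convex_Ioi 0) (fun x hx => (hderiv x hx).continuousAt.continuousWithinAt)
    (fun x hx => ?_) (fun x hx => ?_)
  all_goals rw [interior_Ioi] at hx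
  · exact (hderiv x hx).hasDerivWithinAt
  · linarith [one_sub_inv_le_log_of_pos (show 0 < x from hx), one_div x]

lemma three_mul_sq_sub_one_le_klFun {t : ℝ} (ht : 0 < t) :
    3 * (t - 1) ^ 2 ≤ 2 * (t + 2) * klFun t := by
  have hderiv : ∀ t ∈ Ioi (0 : ℝ), HasDerivAt (fun t : ℝ => 2 * (t + 2) * klFun t - 3 * (t - 1) ^ 2)
      (4 * ((t + 1) * Real.log t - 2 * (t - 1))) t := by
    intro t (ht : 0 < t)
    refine ((((hasDerivAt_id t).add_const 2).const_mul 2).mul (hasDerivAt_klFun ht.ne')).sub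
      ((((hasDerivAt_id t).sub_const 1).pow 2).const_mul 3) |>.congr_deriv ?_
    simp only [klFun, id]
    ring
  have hsign : ∀ t ∈ Ioi (0 : ℝ), 0 ≤ (t - 1) * (4 * ((t + 1) * Real.log t - 2 * (t - 1))) := by
    intro t (ht : 0 < t)
    have hmono := monotoneOn_add_one_mul_log_sub (a := 1) (b := t) (mem_Ioi.mpr one_pos) ht
    have hmono' := monotoneOn_add_one_mul_log_sub (a := t) (b := 1) ht (mem_Ioi.mpr one_pos)
    norm_num at hmono hmono'
    rcases le_total 1 t with h | h
    · nlinarith [hmono h]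
    · nlinarith [hmono' h]
  have hmin := isMinOn_of_hasDerivAt_of_sign ordConnected_Ioi (mem_Ioi.mpr one_pos) hderiv hsign ht
  simp only [mem_ofPred_eq, klFun_one] at hmin
  linarith

lemma three_mul_sq_sub_le {p q : ℝ} (hp : 0 < p) (hq : 0 < q) :
    3 * (p - q) ^ 2 ≤ 2 * (p + 2 * q) * (p * (Real.log p - Real.log q) - p + q) := by
  have h := mul_le_mul_of_nonneg_left (three_mul_sq_sub_one_le_klFun (div_pos hp hq))
    (sq_nonneg q)
  rw [klFun, Real.log_div hp.ne' hq.ne'] at h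
  have hl : q ^ 2 * (3 * (p / q - 1) ^ 2) = 3 * (p - q) ^ 2 := by field_simp
  have hr : q ^ 2 * (2 * (p / q + 2) * (p / q * (Real.log p - Real.log q) + 1 - p / q))
      = 2 * (p + 2 * q) * (p * (Real.log p - Real.log q) - p + q) := by field_simp; ring
  rwa [hl, hr] at h

section

variable {α : Type*} [MeasurableSpace α] {ν : Measure α}

theorem pinsker {p q : α → ℝ} (hp : ∀ᵐ x ∂ν, 0 < p x) (hq : ∀ᵐ x ∂ν, 0 < q x)
    (hp_int : Integrable p ν) (hq_int : Integrable q ν)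
    (hp_one : ∫ x, p x ∂ν = 1) (hq_one : ∫ x, q x ∂ν = 1)
    (hkl : Integrable (fun x => p x * (Real.log (p x) - Real.log (q x))) ν) :
    (∫ x, |p x - q x| ∂ν) ^ 2 / 2 ≤ ∫ x, p x * (Real.log (p x) - Real.log (q x)) ∂ν := by
  set S := ∫ x, |p x - q x| ∂ν
  -- AM-GM `S |p - q| ≤ 3 (p - q)² / (2 (p + 2q)) + S² (p + 2q) / 6`: Cauchy–Schwarz in disguise.
  have hpointwise : ∀ᵐ x ∂ν, S * |p x - q x| ≤
      p x * (Real.log (p x) - Real.log (q x)) + (S ^ 2 / 6 - 1) * p x + (S ^ 2 / 3 + 1) * q x := by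
    filter_upwards [hp, hq] with x hpx hqx
    have h := three_mul_sq_sub_le hpx hqx
    have hw : 0 < p x + 2 * q x := by positivity
    nlinarith [sq_nonneg (3 * |p x - q x| - S * (p x + 2 * q x)), sq_abs (p x - q x)]
  have hkl_p : Integrable
      (fun x => p x * (Real.log (p x) - Real.log (q x)) + (S ^ 2 / 6 - 1) * p x) ν :=
    hkl.add (hp_int.const_mul _)
  have hint : ∫ x, S * |p x - q x| ∂ν ≤ ∫ x, (p x * (Real.log (p x) - Real.log (q x))
      + (S ^ 2 / 6 - 1) * p x + (S ^ 2 / 3 + 1) * q x) ∂ν :=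
    integral_mono_ae ((hp_int.sub hq_int).abs.const_mul S) (hkl_p.add (hq_int.const_mul _))
      hpointwise
  rw [integral_const_mul, integral_add hkl_p (hq_int.const_mul _),
    integral_add hkl (hp_int.const_mul _), integral_const_mul, integral_const_mul, hp_one,
    hq_one] at hint
  nlinarith

lemma integrable_mul_log_sub_log_of_const_mul_le {p m : α → ℝ} {c : ℝ} (hc : 0 < c)
    (hp : ∀ᵐ x ∂ν, 0 < p x) (hpm : ∀ᵐ x ∂ν, c * p x ≤ m x)
    (hp_int : Integrable p ν) (hm_int : Integrable m ν) :
    Integrable (fun x => p x * (Real.log (p x) - Real.log (m x))) ν := by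
  have hmeas : AEStronglyMeasurable (fun x => p x * (Real.log (p x) - Real.log (m x))) ν :=
    (hp_int.aemeasurable.mul ((Real.measurable_log.comp_aemeasurable hp_int.aemeasurable).sub
      (Real.measurable_log.comp_aemeasurable hm_int.aemeasurable))).aestronglyMeasurable
  refine ((hp_int.const_mul |Real.log c|).add hm_int).mono' hmeas ?_
  simp only [Pi.add_apply]
  filter_upwards [hp, hpm] with x hpx hpmx
  have hmx : 0 < m x := (mul_pos hc hpx).trans_le hpmx
  have hupper : Real.log c + Real.log (p x) ≤ Real.log (m x) := by
    rw [← Real.log_mul hc.ne' hpx.ne']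
    exact Real.log_le_log (mul_pos hc hpx) hpmx
  have hlower : Real.log (m x) - Real.log (p x) ≤ m x / p x - 1 := by
    rw [← Real.log_div hmx.ne' hpx.ne']
    exact Real.log_le_sub_one_of_pos (div_pos hmx hpx)
  have hdiv : p x * (m x / p x - 1) = m x - p x := by field_simp
  rw [Real.norm_eq_abs, abs_le]
  constructor
  · nlinarith [mul_le_mul_of_nonneg_left hlower hpx.le, abs_nonneg (Real.log c)]
  · nlinarith [neg_abs_le (Real.log c)]

lemma integral_mix_mul_log_eq {p q m : α → ℝ} {lam : ℝ}
    (hm : ∀ x, m x = lam * p x + (1 - lam) * q x)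
    (hp_log : Integrable (fun x => p x * Real.log (p x)) ν)
    (hq_log : Integrable (fun x => q x * Real.log (q x)) ν)
    (hp_kl : Integrable (fun x => p x * (Real.log (p x) - Real.log (m x))) ν)
    (hq_kl : Integrable (fun x => q x * (Real.log (q x) - Real.log (m x))) ν) :
    ∫ x, m x * Real.log (m x) ∂ν
      = lam * ∫ x, p x * Real.log (p x) ∂ν + (1 - lam) * ∫ x, q x * Real.log (q x) ∂ν
        - lam * ∫ x, p x * (Real.log (p x) - Real.log (m x)) ∂ν
        - (1 - lam) * ∫ x, q x * (Real.log (q x) - Real.log (m x)) ∂ν := by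
  have hpoint : (fun x => m x * Real.log (m x)) = fun x =>
      lam * (p x * Real.log (p x)) + (1 - lam) * (q x * Real.log (q x))
        - lam * (p x * (Real.log (p x) - Real.log (m x)))
        - (1 - lam) * (q x * (Real.log (q x) - Real.log (m x))) := by
    ext x
    rw [hm]
    ring
  rw [hpoint, integral_sub, integral_sub, integral_add, integral_const_mul, integral_const_mul,
    integral_const_mul, integral_const_mul]
  all_goals fun_prop

theorem integral_mix_mul_log_le {p q m : α → ℝ} {lam : ℝ} (hlam : lam ∈ Ioo (0 : ℝ) 1)
    (hm : ∀ x, m x = lam * p x + (1 - lam) * q x)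
    (hp : ∀ᵐ x ∂ν, 0 < p x) (hq : ∀ᵐ x ∂ν, 0 < q x)
    (hp_int : Integrable p ν) (hq_int : Integrable q ν)
    (hp_one : ∫ x, p x ∂ν = 1) (hq_one : ∫ x, q x ∂ν = 1)
    (hp_log : Integrable (fun x => p x * Real.log (p x)) ν)
    (hq_log : Integrable (fun x => q x * Real.log (q x)) ν) :
    ∫ x, m x * Real.log (m x) ∂ν
      ≤ lam * ∫ x, p x * Real.log (p x) ∂ν + (1 - lam) * ∫ x, q x * Real.log (q x) ∂ν
        - lam * (1 - lam) * (∫ x, |p x - q x| ∂ν) ^ 2 / 2 := by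
  obtain ⟨hlam0, hlam1⟩ := hlam
  have hlam1' : 0 < 1 - lam := sub_pos.2 hlam1
  have hm_eq : m = fun x => lam * p x + (1 - lam) * q x := funext hm
  have hm_int : Integrable m ν := hm_eq ▸ (hp_int.const_mul _).add (hq_int.const_mul _)
  have hm_one : ∫ x, m x ∂ν = 1 := by
    rw [hm_eq, integral_add (hp_int.const_mul _) (hq_int.const_mul _), integral_const_mul,
      integral_const_mul, hp_one, hq_one]
    ring
  have hm_pos : ∀ᵐ x ∂ν, 0 < m x := by
    filter_upwards [hp, hq] with x hpx hqx
    rw [hm]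
    positivity
  have hp_kl := integrable_mul_log_sub_log_of_const_mul_le hlam0 hp
    (by filter_upwards [hq] with x hqx; rw [hm]; nlinarith) hp_int hm_int
  have hq_kl := integrable_mul_log_sub_log_of_const_mul_le hlam1' hq
    (by filter_upwards [hp] with x hpx; rw [hm]; nlinarith) hq_int hm_int
  have hp_dist : ∫ x, |p x - m x| ∂ν = (1 - lam) * ∫ x, |p x - q x| ∂ν := by
    rw [← integral_const_mul]
    congr 1 with x
    rw [hm, ← abs_of_pos hlam1', ← abs_mul, abs_of_pos hlam1']
    ring_nf
  have hq_dist : ∫ x, |q x - m x| ∂ν = lam * ∫ x, |p x - q x| ∂ν := by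
    rw [← integral_const_mul]
    congr 1 with x
    rw [hm, ← abs_of_pos hlam0, ← abs_mul, abs_of_pos hlam0, ← abs_neg]
    ring_nf
  have hp_pinsker := pinsker hp hm_pos hp_int hm_int hp_one hm_one hp_kl
  have hq_pinsker := pinsker hq hm_pos hq_int hm_int hq_one hm_one hq_kl
  rw [hp_dist] at hp_pinsker
  rw [hq_dist] at hq_pinsker
  rw [integral_mix_mul_log_eq hm hp_log hq_log hp_kl hq_kl]
  nlinarith [mul_le_mul_of_nonneg_left hp_pinsker hlam0.le,
    mul_le_mul_of_nonneg_left hq_pinsker hlam1'.le]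

lemma abs_setIntegral_le_integral_abs_div_two {f : α → ℝ} (hf : Integrable f ν)
    (hf_zero : ∫ x, f x ∂ν = 0) {s : Set α} (hs : MeasurableSet s) :
    |∫ x in s, f x ∂ν| ≤ (∫ x, |f x| ∂ν) / 2 := by
  have hsplit := integral_add_compl hs hf
  have hsplit_abs := integral_add_compl hs hf.abs
  have hs_le := abs_integral_le_integral_abs (f := f) (μ := ν.restrict s)
  have hsc_le := abs_integral_le_integral_abs (f := f) (μ := ν.restrict sᶜ)
  rw [hf_zero] at hsplit
  rw [show ∫ x in s, f x ∂ν = -∫ x in sᶜ, f x ∂ν by linarith, abs_neg] at hs_le ⊢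
  linarith

lemma toReal_withDensity_ofReal_apply {p : α → ℝ} (hp : 0 ≤ᵐ[ν] p)
    (hp_meas : AEStronglyMeasurable p ν) {s : Set α} (hs : MeasurableSet s) :
    (ν.withDensity (fun x => ENNReal.ofReal (p x)) s).toReal = ∫ x in s, p x ∂ν := by
  rw [withDensity_apply _ hs,
    integral_eq_lintegral_of_nonneg_ae (ae_restrict_of_ae hp) hp_meas.restrict]

lemma tvDist_nonneg (μ μ' : Measure α) : 0 ≤ tvDist μ μ' :=
  Real.iSup_nonneg fun _ => abs_nonneg _

lemma tvDist_withDensity_le {p q : α → ℝ} (hp : 0 ≤ᵐ[ν] p) (hq : 0 ≤ᵐ[ν] q)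
    (hp_int : Integrable p ν) (hq_int : Integrable q ν)
    (hpq : ∫ x, p x ∂ν = ∫ x, q x ∂ν) :
    tvDist (ν.withDensity fun x => ENNReal.ofReal (p x))
      (ν.withDensity fun x => ENNReal.ofReal (q x)) ≤ (∫ x, |p x - q x| ∂ν) / 2 := by
  refine Real.iSup_le (fun ⟨s, hs⟩ => ?_) (by positivity)
  rw [toReal_withDensity_ofReal_apply hp hp_int.1 hs,
    toReal_withDensity_ofReal_apply hq hq_int.1 hs,
    ← integral_sub hp_int.integrableOn hq_int.integrableOn]
  exact abs_setIntegral_le_integral_abs_div_two (f := fun x => p x - q x) (hp_int.sub hq_int)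
    (by rw [integral_sub hp_int hq_int, hpq, sub_self]) hs

end

namespace IsDensityMeasure

variable {d : ℕ} {Z : Set (Fin d → ℝ)} {μ : Measure (Fin d → ℝ)} {ρ : (Fin d → ℝ) → ℝ}

lemma integrable_s5 (h : IsDensityMeasure Z μ ρ) : Integrable ρ (volume.restrict Z) := by
  obtain ⟨hprob, hmeas, hpos, rfl⟩ := h
  refine ⟨hmeas.aestronglyMeasurable,
    (hasFiniteIntegral_iff_ofReal (hpos.mono fun _ => le_of_lt)).2 ?_⟩
  rw [← setLIntegral_univ, ← withDensity_apply _ MeasurableSet.univ, measure_univ]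
  exact one_lt_top

lemma integral_eq_one (h : IsDensityMeasure Z μ ρ) : ∫ z in Z, ρ z = 1 := by
  obtain ⟨hprob, hmeas, hpos, rfl⟩ := h
  have h := toReal_withDensity_ofReal_apply (hpos.mono fun _ => le_of_lt)
    hmeas.aestronglyMeasurable MeasurableSet.univ
  rwa [measure_univ, Measure.restrict_univ, toReal_one, eq_comm] at h

end IsDensityMeasure

theorem negEntropy_strongly_convex_general
    (d : ℕ) (Z : Set (Fin d → ℝ))
    (μ μ' : Measure (Fin d → ℝ)) (ρ ρ' : (Fin d → ℝ) → ℝ)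
    (hμ : IsDensityMeasure Z μ ρ) (hμ' : IsDensityMeasure Z μ' ρ')
    (hint1 : IntegrableOn (fun z => ρ z * Real.log (ρ z)) Z)
    (hint2 : IntegrableOn (fun z => ρ' z * Real.log (ρ' z)) Z)
    (lam : ℝ) (hlam : lam ∈ Set.Ioo (0 : ℝ) 1) :
    (∫ z in Z, (lam * ρ z + (1 - lam) * ρ' z)
        * Real.log (lam * ρ z + (1 - lam) * ρ' z))
      ≤ lam * (∫ z in Z, ρ z * Real.log (ρ z))
          + (1 - lam) * (∫ z in Z, ρ' z * Real.log (ρ' z))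
          - 2 * lam * (1 - lam) * (tvDist μ μ') ^ 2 := by
  have hρ_int := hμ.integrable_s5
  have hρ'_int := hμ'.integrable_s5
  have hρ_one := hμ.integral_eq_one
  have hρ'_one := hμ'.integral_eq_one
  obtain ⟨-, -, hρ_pos, rfl⟩ := hμ
  obtain ⟨-, -, hρ'_pos, rfl⟩ := hμ'
  have hgap := integral_mix_mul_log_le (m := fun z => lam * ρ z + (1 - lam) * ρ' z) hlam
    (fun _ => rfl) hρ_pos hρ'_pos hρ_int hρ'_int hρ_one hρ'_one hint1 hint2
  have htv := tvDist_withDensity_le (hρ_pos.mono fun _ => le_of_lt)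
    (hρ'_pos.mono fun _ => le_of_lt) hρ_int hρ'_int (hρ_one.trans hρ'_one.symm)
  have htv_sq := pow_le_pow_left₀ (tvDist_nonneg _ _) htv 2
  have hlam_mul : 0 ≤ lam * (1 - lam) := mul_nonneg hlam.1.le (sub_nonneg.2 hlam.2.le)
  nlinarith [mul_le_mul_of_nonneg_left htv_sq hlam_mul]

/-- strong convexity of the negative entropy w.r.t. total variation. -/
theorem negEntropy_strongly_convex
    (d : ℕ) (Z : Set (Fin d → ℝ)) (hZ : MeasurableSet Z)
    (hZ0 : volume Z ≠ 0) (hZfin : volume Z ≠ ⊤)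
    (μ μ' : Measure (Fin d → ℝ)) (ρ ρ' : (Fin d → ℝ) → ℝ)
    (hμ : IsDensityMeasure Z μ ρ) (hμ' : IsDensityMeasure Z μ' ρ')
    (hint1 : IntegrableOn (fun z => ρ z * Real.log (ρ z)) Z)
    (hint2 : IntegrableOn (fun z => ρ' z * Real.log (ρ' z)) Z)
    (lam : ℝ) (hlam : lam ∈ Set.Ioo (0 : ℝ) 1) :
    (∫ z in Z, (lam * ρ z + (1 - lam) * ρ' z)
        * Real.log (lam * ρ z + (1 - lam) * ρ' z))
      ≤ lam * (∫ z in Z, ρ z * Real.log (ρ z))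
          + (1 - lam) * (∫ z in Z, ρ' z * Real.log (ρ' z))
          - 2 * lam * (1 - lam) * (tvDist μ μ') ^ 2 :=
  negEntropy_strongly_convex_general d Z μ μ' ρ ρ' hμ hμ' hint1 hint2 lam hlam

end

end Paper
end

section
/- Lipschitz continuity of the Gibbs map in total variation: For all bounded measurable functions h, h' : Z → ℝ, the Gibbs measures satisfy dTV(Gibbs(h), Gibbs(h')) ≤ (1/2) ‖h − h'‖∞. -/
open MeasureTheory Real ENNReal

namespace Paper

noncomputable section

/-! The Gibbs measure is the exponential tilt `(volume.restrict Z).tilted h`. For a measurable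
`A`, write `a, b` for the integrals of `e^h` over `A, Aᶜ` and `a', b'` for those of `e^{h'}`;
if `|h - h'| ≤ M` a.e., each of `a, b` is within a factor `e^M` of `a', b'`. The largest
possible gap `|a / (a + b) - a' / (a' + b')|` under these constraints is `tanh (M / 2)`,
and `tanh y ≤ y` for `y ≥ 0`. -/

lemma sinh_le_mul_cosh {y : ℝ} (hy : 0 ≤ y) : sinh y ≤ y * cosh y := by
  refine hasSum_le (fun n => ?_) (hasSum_sinh y) ((hasSum_cosh y).mul_left y)
  rw [← mul_div_assoc, ← pow_succ']
  gcongr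
  exact Nat.le_succ _

lemma tanh_le_self {y : ℝ} (hy : 0 ≤ y) : tanh y ≤ y := by
  rw [tanh_eq_sinh_div_cosh, div_le_iff₀ (cosh_pos y)]
  exact sinh_le_mul_cosh hy

lemma tanh_half (x : ℝ) : tanh (x / 2) = (1 - exp (-x)) / (1 + exp (-x)) := by
  have h : exp (-x) = (exp (x / 2))⁻¹ ^ 2 := by rw [← exp_neg, ← exp_nat_mul]; ring_nf
  rw [tanh_eq, h, exp_neg]
  field_simp

lemma mul_sub_mul_le_of_le {a b a' b' t : ℝ} (ha : 0 ≤ a) (hb : 0 ≤ b) (hb' : 0 ≤ b')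
    (ht₀ : 0 ≤ t) (ht₁ : t ≤ 1) (haa' : t * a ≤ a') (hbb' : t * b' ≤ b) :
    (1 + t) * (a * b' - a' * b) ≤ (1 - t) * ((a + b) * (a' + b')) := by
  -- The gap is `(1 - t) (a a' + b b') - 2 t a b' + 2 a' b ≥ (1 - t) t (a - b')²`.
  nlinarith [mul_nonneg (mul_nonneg (sub_nonneg.2 ht₁) ha) (sub_nonneg.2 haa'),
    mul_nonneg (mul_nonneg (sub_nonneg.2 ht₁) hb') (sub_nonneg.2 hbb'),
    mul_nonneg (mul_nonneg (sub_nonneg.2 ht₁) ht₀) (sq_nonneg (a - b')),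
    mul_nonneg hb (sub_nonneg.2 haa'), mul_nonneg (mul_nonneg ht₀ ha) (sub_nonneg.2 hbb')]

lemma abs_div_add_sub_div_add_le {a b a' b' t : ℝ} (ha : 0 ≤ a) (hb : 0 ≤ b) (ha' : 0 ≤ a')
    (hb' : 0 ≤ b') (ht₀ : 0 ≤ t) (ht₁ : t ≤ 1) (hab : 0 < a + b) (hab' : 0 < a' + b')
    (haa' : t * a ≤ a') (ha'a : t * a' ≤ a) (hbb' : t * b ≤ b') (hb'b : t * b' ≤ b) :
    |a / (a + b) - a' / (a' + b')| ≤ (1 - t) / (1 + t) := by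
  rw [div_sub_div _ _ hab.ne' hab'.ne', abs_div, abs_of_pos (mul_pos hab hab'),
    div_le_div_iff₀ (mul_pos hab hab') (by linarith),
    ← abs_of_pos (by linarith : 0 < 1 + t), ← abs_mul, abs_le]
  constructor
  · nlinarith [mul_sub_mul_le_of_le ha' hb' hb ht₀ ht₁ ha'a hbb']
  · nlinarith [mul_sub_mul_le_of_le ha hb hb' ht₀ ht₁ haa' hb'b]

section Tilted

variable {α : Type*} [MeasurableSpace α] {μ : Measure α} {f g : α → ℝ}

lemma integrable_exp_of_abs_le [IsFiniteMeasure μ] (hf : AEMeasurable f μ) {C : ℝ}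
    (hC : ∀ᵐ x ∂μ, |f x| ≤ C) : Integrable (fun x => exp (f x)) μ := by
  simpa using ProbabilityTheory.integrable_exp_mul_of_le 1 C zero_le_one hf
    (hC.mono fun _ hx => (abs_le.1 hx).2)

lemma tilted_real_apply (f : α → ℝ) {A : Set α} (hA : MeasurableSet A) :
    (μ.tilted f).real A = (∫ x in A, exp (f x) ∂μ) / ∫ x, exp (f x) ∂μ := by
  rw [measureReal_def, tilted_apply_eq_ofReal_integral' f hA, integral_div,
    toReal_ofReal (by positivity)]

lemma exp_neg_mul_setIntegral_exp_le (hf : Integrable (fun x => exp (f x)) μ)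
    (hg : Integrable (fun x => exp (g x)) μ) {M : ℝ} (hfg : ∀ᵐ x ∂μ, g x ≤ f x + M)
    (s : Set α) : exp (-M) * ∫ x in s, exp (g x) ∂μ ≤ ∫ x in s, exp (f x) ∂μ := by
  rw [← integral_const_mul]
  refine setIntegral_mono_ae (hg.integrableOn.const_mul _) hf.integrableOn ?_
  filter_upwards [hfg] with x hx
  rw [← exp_add]
  exact exp_le_exp.2 (by linarith)

lemma abs_tilted_real_sub_le_tanh (hf : Integrable (fun x => exp (f x)) μ)
    (hg : Integrable (fun x => exp (g x)) μ) {M : ℝ} (hM : 0 ≤ M)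
    (hfg : ∀ᵐ x ∂μ, |f x - g x| ≤ M) {A : Set α} (hA : MeasurableSet A) :
    |(μ.tilted f).real A - (μ.tilted g).real A| ≤ tanh (M / 2) := by
  have ht₁ : exp (-M) ≤ 1 := exp_le_one_iff.2 (neg_nonpos.2 hM)
  rw [tanh_half]
  rcases eq_zero_or_neZero μ with rfl | hμ
  · simpa using div_nonneg (sub_nonneg.2 ht₁) (by positivity)
  have hf_le : ∀ᵐ x ∂μ, f x ≤ g x + M := hfg.mono fun x hx => by linarith [(abs_le.1 hx).2]
  have hg_le : ∀ᵐ x ∂μ, g x ≤ f x + M := hfg.mono fun x hx => by linarith [(abs_le.1 hx).1]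
  have hexp_nonneg (h : α → ℝ) (s : Set α) : 0 ≤ ∫ x in s, exp (h x) ∂μ :=
    integral_nonneg fun _ => (exp_pos _).le
  rw [tilted_real_apply f hA, tilted_real_apply g hA, ← integral_add_compl hA hf,
    ← integral_add_compl hA hg]
  exact abs_div_add_sub_div_add_le (hexp_nonneg f A) (hexp_nonneg f Aᶜ) (hexp_nonneg g A)
    (hexp_nonneg g Aᶜ) (exp_pos _).le ht₁
    ((integral_add_compl hA hf).symm ▸ integral_exp_pos hf)
    ((integral_add_compl hA hg).symm ▸ integral_exp_pos hg)
    (exp_neg_mul_setIntegral_exp_le hg hf hf_le A) (exp_neg_mul_setIntegral_exp_le hf hg hg_le A)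
    (exp_neg_mul_setIntegral_exp_le hg hf hf_le Aᶜ) (exp_neg_mul_setIntegral_exp_le hf hg hg_le Aᶜ)

end Tilted

lemma ae_abs_le_supNormOn {d : ℕ} {Z : Set (Fin d → ℝ)} {f : (Fin d → ℝ) → ℝ} {C : ℝ}
    (hC : ∀ᵐ z ∂volume.restrict Z, |f z| ≤ C) :
    ∀ᵐ z ∂volume.restrict Z, |f z| ≤ supNormOn Z f := by
  have hfin : essSup (fun z => ENNReal.ofReal |f z|) (volume.restrict Z) ≠ ∞ :=
    ne_top_of_le_ne_top ofReal_ne_top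
      (essSup_le_of_ae_le _ (hC.mono fun _ hz => ofReal_le_ofReal hz))
  filter_upwards [ae_le_essSup fun z => ENNReal.ofReal |f z|] with z hz
  exact (ofReal_le_iff_le_toReal hfin).1 hz

theorem gibbs_tv_lipschitz_general
    (d : ℕ) (Z : Set (Fin d → ℝ)) (hZ : MeasurableSet Z)
    (hZfin : volume Z ≠ ⊤)
    (h h' : (Fin d → ℝ) → ℝ) (hhm : Measurable h) (hh'm : Measurable h')
    (hbd : ∃ C, ∀ z ∈ Z, |h z| ≤ C) (hbd' : ∃ C, ∀ z ∈ Z, |h' z| ≤ C) :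
    tvDist (gibbsMeasure Z h) (gibbsMeasure Z h')
      ≤ (1 / 2) * supNormOn Z (fun z => h z - h' z) := by
  have : IsFiniteMeasure (volume.restrict Z) := isFiniteMeasure_restrict.2 hZfin
  obtain ⟨C, hC⟩ := hbd
  obtain ⟨C', hC'⟩ := hbd'
  have hC_ae : ∀ᵐ z ∂volume.restrict Z, |h z| ≤ C := (ae_restrict_iff' hZ).2 (.of_forall hC)
  have hC'_ae : ∀ᵐ z ∂volume.restrict Z, |h' z| ≤ C' := (ae_restrict_iff' hZ).2 (.of_forall hC')
  set M := supNormOn Z (fun z => h z - h' z)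
  have hdiff : ∀ᵐ z ∂volume.restrict Z, |h z - h' z| ≤ M := by
    refine ae_abs_le_supNormOn (C := C + C') ?_
    filter_upwards [hC_ae, hC'_ae] with z hz hz'
    exact (abs_sub _ _).trans (add_le_add hz hz')
  have hM : 0 ≤ M := toReal_nonneg
  have : Nonempty {A : Set (Fin d → ℝ) // MeasurableSet A} := ⟨⟨∅, .empty⟩⟩
  refine ciSup_le fun A => ?_
  calc _ ≤ tanh (M / 2) :=
        abs_tilted_real_sub_le_tanh (integrable_exp_of_abs_le hhm.aemeasurable hC_ae)
          (integrable_exp_of_abs_le hh'm.aemeasurable hC'_ae) hM hdiff A.2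
    _ ≤ M / 2 := tanh_le_self (by positivity)
    _ = 1 / 2 * M := by ring

/-- Lipschitz continuity of the Gibbs map in total variation. -/
theorem gibbs_tv_lipschitz
    (d : ℕ) (Z : Set (Fin d → ℝ)) (hZ : MeasurableSet Z)
    (hZ0 : volume Z ≠ 0) (hZfin : volume Z ≠ ⊤)
    (h h' : (Fin d → ℝ) → ℝ) (hhm : Measurable h) (hh'm : Measurable h')
    (hbd : ∃ C, ∀ z ∈ Z, |h z| ≤ C) (hbd' : ∃ C, ∀ z ∈ Z, |h' z| ≤ C) :
    tvDist (gibbsMeasure Z h) (gibbsMeasure Z h')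
      ≤ (1 / 2) * supNormOn Z (fun z => h z - h' z) :=
  gibbs_tv_lipschitz_general d Z hZ hZfin h h' hhm hh'm hbd hbd'

end

end Paper
end

section
/- Smoothness of the log-partition functional: For all bounded measurable functions h, h' : Z → ℝ, one has Φ*(h) ≤ Φ*(h') + ∫_Z (h − h') dGibbs(h') + (1/2) ‖h − h'‖∞². -/
/-! Under the Gibbs measure `ν` of `h'`, the partition-function ratio `∫_Z e^h / ∫_Z e^{h'}` is
`∫ e^{h - h'} dν`. Taking logarithms, the inequality becomes Hoeffding's lemma
`log E_ν[e^X] ≤ E_ν[X] + M² / 2` for `X = h - h'`, which takes values in `[-M, M]` with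
`M = ‖h - h'‖∞`. -/

open MeasureTheory Real ENNReal

namespace Paper

noncomputable section

open ProbabilityTheory
open scoped NNReal

section

variable {α : Type*} [MeasurableSpace α] {μ : Measure α}

lemma log_integral_exp_le_integral_add_sq_div_two [IsProbabilityMeasure μ] {X : α → ℝ} {M : ℝ}
    (hX : AEMeasurable X μ) (hb : ∀ᵐ ω ∂μ, |X ω| ≤ M) :
    log (∫ ω, exp (X ω) ∂μ) ≤ ∫ ω, X ω ∂μ + M ^ 2 / 2 := by
  have hb' : ∀ᵐ ω ∂μ, X ω ∈ Set.Icc (-M) M := by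
    filter_upwards [hb] with ω hω using abs_le.1 hω
  have hoeffding := (hasSubgaussianMGF_of_mem_Icc hX hb').mgf_le 1
  have hpos : 0 < ∫ ω, exp (X ω) ∂μ := by
    simpa [mgf] using mgf_pos (t := 1) (integrable_exp_mul_of_mem_Icc hX hb')
  have hconst : (((‖M - -M‖₊ / 2) ^ 2 : ℝ≥0) : ℝ) = M ^ 2 := by
    simp only [NNReal.coe_pow, NNReal.coe_div, coe_nnnorm, Real.norm_eq_abs, NNReal.coe_ofNat,
      sq_abs, div_pow]
    ring
  simp only [mgf, one_mul, exp_sub, integral_div, hconst, one_pow, mul_one] at hoeffding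
  have := log_le_log (by positivity) hoeffding
  rwa [log_div hpos.ne' (exp_pos _).ne', log_exp, log_exp, sub_le_iff_le_add'] at this

def gibbs (μ : Measure α) (h : α → ℝ) : Measure α :=
  μ.withDensity fun x => ENNReal.ofReal (exp (h x) / ∫ y, exp (h y) ∂μ)

lemma isProbabilityMeasure_gibbs [NeZero μ] {h : α → ℝ}
    (hh : Integrable (fun x => exp (h x)) μ) : IsProbabilityMeasure (gibbs μ h) := by
  have hpos := integral_exp_pos hh
  constructor
  rw [gibbs, withDensity_apply _ MeasurableSet.univ, Measure.restrict_univ,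
    ← ofReal_integral_eq_lintegral_ofReal (hh.div_const _)
      (Filter.Eventually.of_forall fun x => by positivity),
    integral_div, div_self hpos.ne', ENNReal.ofReal_one]

lemma gibbs_absolutelyContinuous (μ : Measure α) (h : α → ℝ) : gibbs μ h ≪ μ :=
  withDensity_absolutelyContinuous _ _

lemma integral_gibbs {h : α → ℝ} (hh : Measurable h) (u : α → ℝ) :
    ∫ x, u x ∂gibbs μ h = (∫ x, exp (h x) * u x ∂μ) / ∫ x, exp (h x) ∂μ := by
  rw [gibbs, integral_withDensity_eq_integral_toReal_smul (by fun_prop)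
    (ae_of_all _ fun _ => ofReal_lt_top), ← integral_div]
  congr 1 with x
  rw [toReal_ofReal (by positivity), smul_eq_mul, div_mul_eq_mul_div]

lemma ae_abs_le_toReal_essSup {f : α → ℝ} {C : ℝ} (hC : ∀ᵐ x ∂μ, |f x| ≤ C) :
    ∀ᵐ x ∂μ, |f x| ≤ (essSup (fun x => ENNReal.ofReal |f x|) μ).toReal := by
  have hfin : essSup (fun x => ENNReal.ofReal |f x|) μ ≠ ⊤ :=
    ne_top_of_le_ne_top ofReal_ne_top
      (essSup_le_of_ae_le _ (hC.mono fun x hx => ofReal_le_ofReal hx))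
  filter_upwards [ae_le_essSup (fun x => ENNReal.ofReal |f x|)] with x hx
  simpa using ENNReal.toReal_mono hfin hx

lemma integrable_exp_of_ae_abs_le [IsFiniteMeasure μ] {h : α → ℝ} {C : ℝ} (hh : Measurable h)
    (hC : ∀ᵐ x ∂μ, |h x| ≤ C) : Integrable (fun x => exp (h x)) μ :=
  Integrable.of_bound (by fun_prop) (exp C) <| hC.mono fun x hx => by
    rw [norm_eq_abs, abs_exp]
    exact exp_le_exp.2 ((le_abs_self _).trans hx)

theorem log_integral_exp_le_add_integral_gibbs [NeZero μ] {g h : α → ℝ} {M : ℝ}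
    (hg : Measurable g) (hh : Measurable h) (hgi : Integrable (fun x => exp (g x)) μ)
    (hhi : Integrable (fun x => exp (h x)) μ) (hM : ∀ᵐ x ∂μ, |g x - h x| ≤ M) :
    log (∫ x, exp (g x) ∂μ)
      ≤ log (∫ x, exp (h x) ∂μ) + ∫ x, (g x - h x) ∂gibbs μ h + M ^ 2 / 2 := by
  have := isProbabilityMeasure_gibbs hhi
  have hoeffding := log_integral_exp_le_integral_add_sq_div_two
    (X := fun x => g x - h x) (by fun_prop)
    ((gibbs_absolutelyContinuous μ h).ae_le hM)
  have hpartition : ∫ x, exp (g x - h x) ∂gibbs μ h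
      = (∫ x, exp (g x) ∂μ) / ∫ x, exp (h x) ∂μ := by
    simp only [integral_gibbs hh, ← exp_add, add_sub_cancel]
  rw [hpartition, log_div (integral_exp_pos hgi).ne' (integral_exp_pos hhi).ne'] at hoeffding
  linarith

end

/-- smoothness of the log-partition functional. -/
theorem logPart_smooth
    (d : ℕ) (Z : Set (Fin d → ℝ)) (hZ : MeasurableSet Z)
    (hZ0 : volume Z ≠ 0) (hZfin : volume Z ≠ ⊤)
    (h h' : (Fin d → ℝ) → ℝ) (hhm : Measurable h) (hh'm : Measurable h')
    (hbd : ∃ C, ∀ z ∈ Z, |h z| ≤ C) (hbd' : ∃ C, ∀ z ∈ Z, |h' z| ≤ C) :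
    logPart Z h ≤ logPart Z h' + (∫ z, (h z - h' z) ∂(gibbsMeasure Z h'))
        + (1 / 2) * (supNormOn Z (fun z => h z - h' z)) ^ 2 := by
  obtain ⟨C, hC⟩ := hbd
  obtain ⟨C', hC'⟩ := hbd'
  have := isFiniteMeasure_restrict.2 hZfin
  have : NeZero (volume.restrict Z) := ⟨by rwa [Ne, Measure.restrict_eq_zero]⟩
  have hdiff : ∀ᵐ z ∂volume.restrict Z, |h z - h' z| ≤ supNormOn Z (fun z => h z - h' z) :=
    ae_abs_le_toReal_essSup <| ae_restrict_of_forall_mem hZ fun z hz =>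
      (abs_sub _ _).trans (add_le_add (hC z hz) (hC' z hz))
  have := log_integral_exp_le_add_integral_gibbs hhm hh'm
    (integrable_exp_of_ae_abs_le hhm (ae_restrict_of_forall_mem hZ hC))
    (integrable_exp_of_ae_abs_le hh'm (ae_restrict_of_forall_mem hZ hC')) hdiff
  have hgibbs : gibbsMeasure Z h' = gibbs (volume.restrict Z) h' := rfl
  rw [logPart, logPart, hgibbs]
  linarith

end

end Paper
end

section
/- Regret bound for infinite-dimensional entropic mirror descent: Let η > 0, let M ≥ 0, let h₁, …, h_T : Z → ℝ be bounded measurable with ‖h_t‖∞ ≤ M for all t, let μ₁ ∈ M(Z), and define recursively μ_{t+1} = MD_η(μ_t, h_t). Then for every μ ∈ M(Z) with KL(μ‖μ₁) < ∞: Σ_{t=1}^T (∫_Z h_t dμ_t − ∫_Z h_t dμ) ≤ KL(μ‖μ₁)/η + η M² T / 2. -/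
open MeasureTheory Real ENNReal

namespace Paper

noncomputable section

/-! Proof: the log-likelihood ratio between consecutive iterates is `-η h_t - log c_t`, so
`KL(μ‖μ_{t+1}) = KL(μ‖μ_t) + η ∫ h_t dμ + log c_t`, where `c_t = ∫ e^{-η h_t} dμ_t`.
Hoeffding's lemma bounds `log c_t ≤ -η ∫ h_t dμ_t + η² M² / 2`; summing over `t`, the
divergences telescope and the last one is nonnegative. -/

open ProbabilityTheory in
theorem log_integral_exp_neg_mul_le {Ω : Type*} [MeasurableSpace Ω] {ν : Measure Ω}
    [IsProbabilityMeasure ν] {X : Ω → ℝ} {M : ℝ} (hX : AEMeasurable X ν)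
    (hXM : ∀ᵐ ω ∂ν, |X ω| ≤ M) (s : ℝ) :
    log (∫ ω, exp (-s * X ω) ∂ν) ≤ -s * ∫ ω, X ω ∂ν + s ^ 2 * M ^ 2 / 2 := by
  have hXI : ∀ᵐ ω ∂ν, X ω ∈ Set.Icc (-M) M := hXM.mono fun ω hω => abs_le.1 hω
  have hmgf := (hasSubgaussianMGF_of_mem_Icc hX hXI).mgf_le (-s)
  simp_rw [sub_eq_add_neg, mgf_add_const] at hmgf
  have hpos : 0 < mgf X ν (-s) := mgf_pos (integrable_exp_mul_of_mem_Icc hX hXI)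
  have hnorm : (((‖M + -(-M)‖₊ / 2) ^ 2 : NNReal) : ℝ) = M ^ 2 := by simp [← two_mul]
  rw [hnorm, mgf] at hmgf
  rw [mgf] at hpos
  rw [log_le_iff_le_exp hpos]
  calc _ ≤ exp (M ^ 2 * (-s) ^ 2 / 2) / exp (-s * -∫ ω, X ω ∂ν) := by
        rw [le_div_iff₀ (exp_pos _)]; exact hmgf
    _ = _ := by rw [← exp_sub]; ring_nf

theorem sum_range_le_of_le_sub_succ {a K : ℕ → ℝ} {b : ℝ} {T : ℕ}
    (hstep : ∀ t < T, a t ≤ K t - K (t + 1) + b) (hK : 0 ≤ K T) :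
    ∑ t ∈ Finset.range T, a t ≤ K 0 + T * b := by
  calc ∑ t ∈ Finset.range T, a t ≤ ∑ t ∈ Finset.range T, (K t - K (t + 1) + b) :=
        Finset.sum_le_sum fun t ht => hstep t (Finset.mem_range.1 ht)
    _ = K 0 - K T + T * b := by
        rw [Finset.sum_add_distrib, Finset.sum_range_sub', Finset.sum_const,
          Finset.card_range, nsmul_eq_mul]
    _ ≤ K 0 + T * b := by linarith

theorem sub_le_mul_log_div {x y : ℝ} (hx : 0 ≤ x) (hy : 0 < y) : x - y ≤ x * log (x / y) := by
  rcases hx.eq_or_lt with rfl | hx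
  · simpa using hy.le
  have h := mul_le_mul_of_nonneg_left (one_sub_inv_le_log_of_pos (div_pos hx hy)) hx.le
  rwa [inv_div, mul_sub, mul_one, mul_div_cancel₀ _ hx.ne'] at h

theorem mul_log_div_mul_exp_div (x : ℝ) {y c : ℝ} (hy : y ≠ 0) (hc : c ≠ 0) (g : ℝ) :
    x * log (x / (y * exp g / c)) = x * log (x / y) - x * g + x * log c := by
  rcases eq_or_ne x 0 with rfl | hx
  · simp
  rw [log_div hx (by positivity), log_div hx hy, log_div (by positivity) hc,
    log_mul hy (exp_ne_zero g), log_exp]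
  ring

section RelEntropy

variable {α : Type*} [MeasurableSpace α] {ν : Measure α}

/-- `KL(ρν ‖ σν)`, in terms of the densities `ρ, σ` with respect to `ν`. -/
def relEntropy (ν : Measure α) (ρ σ : α → ℝ) : ℝ :=
  ∫ z, ρ z * log (ρ z / σ z) ∂ν

theorem relEntropy_nonneg {ρ σ : α → ℝ} (hρ : 0 ≤ᵐ[ν] ρ) (hσ : ∀ᵐ z ∂ν, 0 < σ z)
    (hρi : Integrable ρ ν) (hσi : Integrable σ ν) (hmass : ∫ z, σ z ∂ν ≤ ∫ z, ρ z ∂ν)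
    (hKL : Integrable (fun z => ρ z * log (ρ z / σ z)) ν) :
    0 ≤ relEntropy ν ρ σ := by
  have hle : (fun z => ρ z - σ z) ≤ᵐ[ν] fun z => ρ z * log (ρ z / σ z) := by
    filter_upwards [hρ, hσ] with z hρz hσz using sub_le_mul_log_div hρz hσz
  calc 0 ≤ ∫ z, (ρ z - σ z) ∂ν := by rw [integral_sub hρi hσi]; linarith
    _ ≤ relEntropy ν ρ σ := integral_mono_ae (hρi.sub hσi) hKL hle

theorem relEntropy_of_ae_eq_mul_exp_div {ρ σ σ' g : α → ℝ} {c : ℝ}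
    (hσ : ∀ᵐ z ∂ν, σ z ≠ 0) (hc : c ≠ 0) (hσ' : σ' =ᵐ[ν] fun z => σ z * exp (g z) / c)
    (hρi : Integrable ρ ν) (hρg : Integrable (fun z => ρ z * g z) ν)
    (hKL : Integrable (fun z => ρ z * log (ρ z / σ z)) ν) :
    Integrable (fun z => ρ z * log (ρ z / σ' z)) ν ∧
      relEntropy ν ρ σ' = relEntropy ν ρ σ - ∫ z, ρ z * g z ∂ν + (∫ z, ρ z ∂ν) * log c := by
  have hae : (fun z => ρ z * log (ρ z / σ' z))
      =ᵐ[ν] fun z => ρ z * log (ρ z / σ z) - ρ z * g z + ρ z * log c := by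
    filter_upwards [hσ, hσ'] with z hσz hσ'z
    rw [hσ'z, mul_log_div_mul_exp_div _ hσz hc]
  have hsub : Integrable (fun z => ρ z * log (ρ z / σ z) - ρ z * g z) ν := hKL.sub hρg
  refine ⟨(hsub.add (hρi.mul_const _)).congr hae.symm, ?_⟩
  rw [relEntropy, integral_congr_ae hae, integral_add hsub (hρi.mul_const _),
    integral_sub hKL hρg, integral_mul_const, relEntropy]

end RelEntropy

theorem integral_withDensity_ofReal {α : Type*} [MeasurableSpace α] {ν : Measure α}
    {ρ : α → ℝ} (hρ : Measurable ρ) (hρ0 : 0 ≤ᵐ[ν] ρ) (f : α → ℝ) :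
    ∫ z, f z ∂ν.withDensity (fun z => ENNReal.ofReal (ρ z)) = ∫ z, ρ z * f z ∂ν := by
  rw [integral_withDensity_eq_integral_toReal_smul hρ.ennreal_ofReal
    (.of_forall fun _ => ofReal_lt_top)]
  refine integral_congr_ae ?_
  filter_upwards [hρ0] with z hz
  simp [toReal_ofReal hz]

theorem ae_eq_of_withDensity_ofReal_eq {α : Type*} [MeasurableSpace α] {ν : Measure α}
    [SigmaFinite ν] {f g : α → ℝ} (hf : Measurable f) (hg : Measurable g)
    (hf0 : 0 ≤ᵐ[ν] f) (hg0 : 0 ≤ᵐ[ν] g)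
    (hfg : ν.withDensity (fun z => ENNReal.ofReal (f z))
      = ν.withDensity (fun z => ENNReal.ofReal (g z))) :
    f =ᵐ[ν] g := by
  have h := (withDensity_eq_iff_of_sigmaFinite hf.ennreal_ofReal.aemeasurable
    hg.ennreal_ofReal.aemeasurable).1 hfg
  filter_upwards [h, hf0, hg0] with z hz hfz hgz
  exact (ENNReal.ofReal_eq_ofReal_iff hfz hgz).1 hz

theorem ae_abs_le_of_supNormOn_le {d : ℕ} {Z : Set (Fin d → ℝ)} {h : (Fin d → ℝ) → ℝ}
    {C M : ℝ} (hC : ∀ᵐ z ∂(volume.restrict Z), |h z| ≤ C) (hM : supNormOn Z h ≤ M) :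
    ∀ᵐ z ∂(volume.restrict Z), |h z| ≤ M := by
  have hM0 : 0 ≤ M := toReal_nonneg.trans hM
  have hfin : essSup (fun z => ENNReal.ofReal |h z|) (volume.restrict Z) ≤ ENNReal.ofReal C :=
    essSup_le_of_ae_le _ (hC.mono fun z hz => ofReal_le_ofReal hz)
  have hsup : essSup (fun z => ENNReal.ofReal |h z|) (volume.restrict Z) ≤ ENNReal.ofReal M :=
    (le_ofReal_iff_toReal_le (ne_top_of_le_ne_top ofReal_ne_top hfin) hM0).2 hM
  filter_upwards [ae_le_essSup (fun z => ENNReal.ofReal |h z|)] with z hz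
  exact (ofReal_le_ofReal_iff hM0).1 (hz.trans hsup)

namespace IsDensityMeasure

variable {d : ℕ} {Z : Set (Fin d → ℝ)} {μ : Measure (Fin d → ℝ)} {ρ : (Fin d → ℝ) → ℝ}

theorem nonneg (hμ : IsDensityMeasure Z μ ρ) : 0 ≤ᵐ[volume.restrict Z] ρ :=
  hμ.2.2.1.mono fun _ hz => hz.le

theorem integral_eq (hμ : IsDensityMeasure Z μ ρ) (f : (Fin d → ℝ) → ℝ) :
    ∫ z, f z ∂μ = ∫ z in Z, ρ z * f z := by
  rw [hμ.2.2.2]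
  exact integral_withDensity_ofReal hμ.2.1 hμ.nonneg f

theorem setIntegral_eq_one (hμ : IsDensityMeasure Z μ ρ) : ∫ z in Z, ρ z = 1 := by
  have := hμ.1
  simpa using (hμ.integral_eq fun _ => 1).symm

theorem integrableOn (hμ : IsDensityMeasure Z μ ρ) : IntegrableOn ρ Z :=
  .of_integral_ne_zero (hμ.setIntegral_eq_one ▸ one_ne_zero)

theorem ae_abs_le {h : (Fin d → ℝ) → ℝ} {M : ℝ} (hμ : IsDensityMeasure Z μ ρ)
    (hM : ∀ᵐ z ∂(volume.restrict Z), |h z| ≤ M) : ∀ᵐ z ∂μ, |h z| ≤ M := by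
  rw [hμ.2.2.2]
  exact (withDensity_absolutelyContinuous _ _).ae_le hM

theorem ae_eq_of_eq_MDmeas {μ' : Measure (Fin d → ℝ)} {ρ' h : (Fin d → ℝ) → ℝ} {η : ℝ}
    (hμ : IsDensityMeasure Z μ ρ) (hμ' : IsDensityMeasure Z μ' ρ') (hh : Measurable h)
    (hμμ' : μ' = MDmeas Z η ρ h) :
    ρ' =ᵐ[volume.restrict Z]
      fun z => ρ z * exp (-η * h z) / ∫ y in Z, ρ y * exp (-η * h y) := by
  have hc : 0 ≤ ∫ y in Z, ρ y * exp (-η * h y) :=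
    integral_nonneg_of_ae (hμ.nonneg.mono fun z hz => mul_nonneg hz (exp_pos _).le)
  refine ae_eq_of_withDensity_ofReal_eq hμ'.2.1
    ((hμ.2.1.mul (hh.const_mul _).exp).div_const _) hμ'.nonneg
    (hμ.nonneg.mono fun z hz => div_nonneg (mul_nonneg hz (exp_pos _).le) hc) ?_
  rw [← hμ'.2.2.2, hμμ', MDmeas]

theorem relEntropy_MDmeas_le {μt : Measure (Fin d → ℝ)} {ρt ρt' g : (Fin d → ℝ) → ℝ}
    {η M : ℝ} (hμ : IsDensityMeasure Z μ ρ) (hμt : IsDensityMeasure Z μt ρt)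
    (hμt' : IsDensityMeasure Z (MDmeas Z η ρt g) ρt') (hg : Measurable g)
    (hgM : ∀ᵐ z ∂(volume.restrict Z), |g z| ≤ M)
    (hKL : IntegrableOn (fun z => ρ z * log (ρ z / ρt z)) Z) :
    IntegrableOn (fun z => ρ z * log (ρ z / ρt' z)) Z ∧
      η * ((∫ z, g z ∂μt) - ∫ z, g z ∂μ)
        ≤ relEntropy (volume.restrict Z) ρ ρt - relEntropy (volume.restrict Z) ρ ρt'
          + η ^ 2 * M ^ 2 / 2 := by
  set c := ∫ y in Z, ρt y * exp (-η * g y) with hc_def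
  have hρt' := hμt.ae_eq_of_eq_MDmeas hμt' hg rfl
  -- if `c = 0`, then `ρt' = 0` a.e. (division by zero), contradicting `∫ ρt' = 1`
  have hc : c ≠ 0 := by
    intro hc0
    have h1 := hμt'.setIntegral_eq_one
    rw [integral_congr_ae hρt', integral_div, ← hc_def, hc0] at h1
    simp at h1
  have hρg : IntegrableOn (fun z => ρ z * (-η * g z)) Z :=
    hμ.integrableOn.mul_bdd (hg.const_mul _).aestronglyMeasurable
      (hgM.mono fun z hz => by
        rw [norm_mul, norm_neg, Real.norm_eq_abs, Real.norm_eq_abs]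
        exact mul_le_mul_of_nonneg_left hz (abs_nonneg η))
  obtain ⟨hint, heq⟩ := relEntropy_of_ae_eq_mul_exp_div
    (hμt.2.2.1.mono fun _ hz => hz.ne') hc hρt' hμ.integrableOn hρg hKL
  have hlog : log c ≤ -η * ∫ z, g z ∂μt + η ^ 2 * M ^ 2 / 2 := by
    have := hμt.1
    rw [hc_def, ← hμt.integral_eq]
    exact log_integral_exp_neg_mul_le hg.aemeasurable (hμt.ae_abs_le hgM) η
  have hρg_eq : ∫ z in Z, ρ z * (-η * g z) = -η * ∫ z, g z ∂μ := by
    rw [hμ.integral_eq, ← integral_const_mul]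
    exact integral_congr_ae (.of_forall fun z => by ring)
  refine ⟨hint, ?_⟩
  rw [heq, hμ.setIntegral_eq_one, one_mul, hρg_eq]
  linarith

end IsDensityMeasure

theorem md_regret_bound_general
    (d T : ℕ) (Z : Set (Fin d → ℝ)) (hZ : MeasurableSet Z)
    (η M : ℝ) (hη : 0 < η)
    (h : ℕ → (Fin d → ℝ) → ℝ)
    (hhm : ∀ t, Measurable (h t))
    (hbdd : ∀ t, ∃ C, ∀ z ∈ Z, |h t z| ≤ C)
    (hM : ∀ t, supNormOn Z (h t) ≤ M)
    (μs : ℕ → Measure (Fin d → ℝ)) (ρs : ℕ → (Fin d → ℝ) → ℝ)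
    (hμs : ∀ t, IsDensityMeasure Z (μs t) (ρs t))
    (hrec : ∀ t, t < T → μs (t + 1) = MDmeas Z η (ρs t) (h t))
    (μ : Measure (Fin d → ℝ)) (ρ : (Fin d → ℝ) → ℝ)
    (hμ : IsDensityMeasure Z μ ρ)
    (hKL : IntegrableOn (fun z => ρ z * Real.log (ρ z / ρs 0 z)) Z) :
    ∑ t ∈ Finset.range T, ((∫ z, h t z ∂(μs t)) - ∫ z, h t z ∂μ)
      ≤ (∫ z in Z, ρ z * Real.log (ρ z / ρs 0 z)) / η + η * M ^ 2 * T / 2 := by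
  have hhM : ∀ t, ∀ᵐ z ∂(volume.restrict Z), |h t z| ≤ M := fun t =>
    have ⟨_, hC⟩ := hbdd t
    ae_abs_le_of_supNormOn_le (ae_restrict_of_forall_mem hZ hC) (hM t)
  have hstep : ∀ t < T, IntegrableOn (fun z => ρ z * log (ρ z / ρs t z)) Z →
      IntegrableOn (fun z => ρ z * log (ρ z / ρs (t + 1) z)) Z ∧
        η * ((∫ z, h t z ∂(μs t)) - ∫ z, h t z ∂μ)
          ≤ relEntropy (volume.restrict Z) ρ (ρs t)
            - relEntropy (volume.restrict Z) ρ (ρs (t + 1)) + η ^ 2 * M ^ 2 / 2 :=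
    fun t ht => hμ.relEntropy_MDmeas_le (hμs t) (hrec t ht ▸ hμs (t + 1)) (hhm t) (hhM t)
  have hint : ∀ t ≤ T, IntegrableOn (fun z => ρ z * log (ρ z / ρs t z)) Z := by
    intro t
    induction t with
    | zero => exact fun _ => hKL
    | succ t ih => exact fun ht => (hstep t ht (ih (Nat.le_of_succ_le ht))).1
  have hKL_nonneg : 0 ≤ relEntropy (volume.restrict Z) ρ (ρs T) :=
    relEntropy_nonneg hμ.nonneg (hμs T).2.2.1 hμ.integrableOn (hμs T).integrableOn
      (by rw [hμ.setIntegral_eq_one, (hμs T).setIntegral_eq_one]) (hint T le_rfl)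
  have hsum := sum_range_le_of_le_sub_succ (fun t ht => (hstep t ht (hint t ht.le)).2) hKL_nonneg
  rw [← Finset.mul_sum] at hsum
  calc ∑ t ∈ Finset.range T, ((∫ z, h t z ∂(μs t)) - ∫ z, h t z ∂μ)
      ≤ (relEntropy (volume.restrict Z) ρ (ρs 0) + T * (η ^ 2 * M ^ 2 / 2)) / η := by
        rwa [le_div_iff₀ hη, mul_comm]
    _ = _ := by rw [relEntropy]; field_simp

/-- regret bound for infinite-dimensional entropic mirror descent. -/
theorem md_regret_bound
    (d T : ℕ) (Z : Set (Fin d → ℝ)) (hZ : MeasurableSet Z)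
    (hZ0 : volume Z ≠ 0) (hZfin : volume Z ≠ ⊤)
    (η M : ℝ) (hη : 0 < η) (hM0 : 0 ≤ M)
    (h : ℕ → (Fin d → ℝ) → ℝ)
    (hhm : ∀ t, Measurable (h t))
    (hbdd : ∀ t, ∃ C, ∀ z ∈ Z, |h t z| ≤ C)
    (hM : ∀ t, supNormOn Z (h t) ≤ M)
    (μs : ℕ → Measure (Fin d → ℝ)) (ρs : ℕ → (Fin d → ℝ) → ℝ)
    (hμs : ∀ t, IsDensityMeasure Z (μs t) (ρs t))
    (hrec : ∀ t, t < T → μs (t + 1) = MDmeas Z η (ρs t) (h t))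
    (μ : Measure (Fin d → ℝ)) (ρ : (Fin d → ℝ) → ℝ)
    (hμ : IsDensityMeasure Z μ ρ)
    (hKL : IntegrableOn (fun z => ρ z * Real.log (ρ z / ρs 0 z)) Z) :
    ∑ t ∈ Finset.range T, ((∫ z, h t z ∂(μs t)) - ∫ z, h t z ∂μ)
      ≤ (∫ z in Z, ρ z * Real.log (ρ z / ρs 0 z)) / η + η * M ^ 2 * T / 2 :=
  md_regret_bound_general d T Z hZ η M hη h hhm hbdd hM μs ρs hμs hrec μ ρ hμ hKL

end

end Paper
end
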